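/- arXiv:1211.7264 — 6 statements merged into one kernel-verified Lean document; each statement's English description precedes it below -/
import Mathlib

section
/- If J is a strongly stable monomial ideal and x^γ is a monomial in J, then there exists a unique decomposition x^γ = x^α · x^η where x^α belongs to the minimal monomial basis B_J of J and min(x^α) ≥ max(x^η) (where min and max denote the smallest and largest variable appearing in a monomial). -/
/-!
If `γ ∈ J` is not a minimal generator, strong stability lets us divide `x^γ` by its smallest
variable `x_m` and stay in `J`; decomposing `γ - e_m` and appending `x_m` to `η` keeps
`min(α) ≥ max(η)`, since `x_m` is the smallest variable of `x^γ`.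

For uniqueness, `min(α) ≥ max(η)` forces `α` to be a tail of `γ = α + η`: all of `γ` above some
variable and part of it at that variable. Tails of `γ` are totally ordered by divisibility, so two
minimal generators among them coincide.
-/

open MvPolynomial

namespace Paper

/-- Monomials (exponent vectors) in `N` variables. -/
abbrev Mon (N : ℕ) := Fin N →₀ ℕ

variable {N : ℕ}

/-- Total degree of a monomial. -/
def mdeg (u : Mon N) : ℕ := u.sum fun _ e => e

/-- `BorelStep a b` : `b` is obtained from `a` by one increasing elementary move,
i.e. `x^a · x_j = x^b · x_i` with `i < j`. -/
def BorelStep (a b : Mon N) : Prop :=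
  ∃ i j : Fin N, i < j ∧ a + Finsupp.single j 1 = b + Finsupp.single i 1

/-- `BorelLt a b` : `a <_B b`, i.e. `b` is obtained from `a` by a nonempty
sequence of increasing elementary moves. -/
def BorelLt (a b : Mon N) : Prop := Relation.TransGen BorelStep a b

/-- A (combinatorially encoded) monomial ideal: a set of monomials closed
under multiplication by monomials. -/
def MonIdeal (J : Set (Mon N)) : Prop := ∀ u ∈ J, ∀ d : Mon N, u + d ∈ J

/-- A strongly stable monomial ideal. -/
def StronglyStable (J : Set (Mon N)) : Prop :=
  MonIdeal J ∧ ∀ b ∈ J, ∀ a, BorelLt b a → a ∈ J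

/-- The minimal monomial basis `B_J` of a monomial ideal. -/
def MinBasis (J : Set (Mon N)) : Set (Mon N) :=
  {u | u ∈ J ∧ ∀ v ∈ J, v ≤ u → v = u}

/-- `min(x^a) ≥ max(x^h)`. -/
def StarCond (a h : Mon N) : Prop :=
  ∀ i j : Fin N, a i ≠ 0 → h j ≠ 0 → j ≤ i

open Finsupp

lemma zero_mem_minBasis {J : Set (Mon N)} (h : 0 ∈ J) : 0 ∈ MinBasis J :=
  ⟨h, fun _ _ hv => nonpos_iff_eq_zero.mp hv⟩

/-- Below a non-minimal `α ∈ J` lies some `α - e_k ∈ J` with `α k ≠ 0`; as `m ≤ k`, one Borel move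
carries it to `α - e_m`. -/
lemma StronglyStable.sub_single_mem {J : Set (Mon N)} (hJ : StronglyStable J) {α : Mon N}
    (hα : α ∈ J) (hαB : α ∉ MinBasis J) {m : Fin N} (hm : α m ≠ 0)
    (hmin : ∀ i, α i ≠ 0 → m ≤ i) : α - single m 1 ∈ J := by
  obtain ⟨v, hv, hvα, hne⟩ : ∃ v ∈ J, v ≤ α ∧ v ≠ α := by
    simpa [MinBasis, hα] using hαB
  obtain ⟨k, hk⟩ : ∃ k, v k < α k := by
    by_contra! h
    exact hne (le_antisymm hvα fun i => h i)
  have hkα : single k 1 ≤ α := single_le_iff.mpr (by omega)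
  have hmα : single m 1 ≤ α := single_le_iff.mpr (Nat.one_le_iff_ne_zero.mpr hm)
  have hvk : v ≤ α - single k 1 := by
    intro i
    rcases eq_or_ne k i with rfl | hki
    · simp only [tsub_apply, single_eq_same]; omega
    · simpa [single_eq_of_ne' hki] using hvα i
  have hk_mem : α - single k 1 ∈ J := add_tsub_cancel_of_le hvk ▸ hJ.1 v hv _
  rcases (hmin k (by omega)).eq_or_lt with rfl | hmk
  · exact hk_mem
  · refine hJ.2 _ hk_mem _ (.single ⟨m, k, hmk, ?_⟩)
    rw [tsub_add_cancel_of_le hkα, tsub_add_cancel_of_le hmα]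

lemma StarCond.add_single {α η : Mon N} (h : StarCond α η) {m : Fin N}
    (hmin : ∀ i, α i ≠ 0 → m ≤ i) : StarCond α (η + single m 1) := by
  intro i j hi hj
  by_cases hηj : η j = 0
  · obtain rfl : m = j := by
      by_contra hmj
      simp [hηj, single_eq_of_ne' hmj] at hj
    exact hmin i hi
  · exact h i j hi hηj

theorem exists_starDecomposition {J : Set (Mon N)} (hJ : StronglyStable J) (γ : Mon N) :
    γ ∈ J → ∃ α η, α ∈ MinBasis J ∧ γ = α + η ∧ StarCond α η := by
  induction γ using WellFoundedLT.induction with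
  | _ γ ih =>
  intro hγ
  by_cases hγB : γ ∈ MinBasis J
  · exact ⟨γ, 0, hγB, (add_zero γ).symm, fun _ _ _ h => absurd rfl h⟩
  have hγ0 : γ ≠ 0 := by
    rintro rfl
    exact hγB (zero_mem_minBasis hγ)
  obtain ⟨m, hm, hmin⟩ := γ.support.exists_min_image id (support_nonempty_iff.mpr hγ0)
  rw [Finsupp.mem_support_iff] at hm
  replace hmin : ∀ i, γ i ≠ 0 → m ≤ i := fun i hi => hmin i (Finsupp.mem_support_iff.mpr hi)
  have hmγ : single m 1 ≤ γ := single_le_iff.mpr (Nat.one_le_iff_ne_zero.mpr hm)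
  have hlt : γ - single m 1 < γ :=
    tsub_le_self.lt_of_ne fun h => by
      have := congrArg (· m) h
      simp only [tsub_apply, single_eq_same] at this
      omega
  obtain ⟨α, η, hαB, hdec, hstar⟩ := ih _ hlt (hJ.sub_single_mem hγ hγB hm hmin)
  have hαγ : α ≤ γ := (le_self_add.trans hdec.ge).trans tsub_le_self
  refine ⟨α, η + single m 1, hαB, ?_, hstar.add_single fun i hi => hmin i ?_⟩
  · rw [← add_assoc, ← hdec, tsub_add_cancel_of_le hmγ]
  · exact (Nat.pos_of_ne_zero hi).trans_le (hαγ i) |>.ne'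

theorem StarCond.le_total {α η α' η' : Mon N} (h : α + η = α' + η') (hs : StarCond α η)
    (hs' : StarCond α' η') : α ≤ α' ∨ α' ≤ α := by
  by_contra! hcmp
  obtain ⟨i, hi⟩ : ∃ i, α' i < α i := by
    by_contra! hle
    exact hcmp.1 fun j => hle j
  have hηi : η' i ≠ 0 := by
    have := congrArg (· i) h
    simp only [Finsupp.add_apply] at this
    omega
  refine hcmp.2 fun j => ?_
  rcases lt_trichotomy j i with hji | rfl | hij
  · by_contra hα'j
    exact absurd (hs' j i (by omega) hηi) (not_le.mpr hji)
  · exact hi.le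
  · have hηj : η j = 0 := by
      by_contra hηj
      exact absurd (hs i j (by omega) hηj) (not_le.mpr hij)
    have := congrArg (· j) h
    simp only [Finsupp.add_apply, hηj] at this
    omega

/-- if `J` is strongly stable and `x^γ ∈ J`, there is a unique
decomposition `x^γ = x^α · x^η` with `x^α ∈ B_J` and `min(x^α) ≥ max(x^η)`. -/
theorem star_decomposition_existsUnique {N : ℕ} {J : Set (Mon N)}
    (hJ : StronglyStable J) {γ : Mon N} (hγ : γ ∈ J) :
    ∃! p : Mon N × Mon N,
      p.1 ∈ MinBasis J ∧ γ = p.1 + p.2 ∧ StarCond p.1 p.2 := by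
  obtain ⟨α, η, hαB, hdec, hstar⟩ := exists_starDecomposition hJ γ hγ
  refine ⟨(α, η), ⟨hαB, hdec, hstar⟩, ?_⟩
  rintro ⟨α', η'⟩ ⟨hαB', hdec', hstar'⟩
  obtain rfl : α' = α := by
    rcases StarCond.le_total (hdec.symm.trans hdec') hstar hstar' with hle | hle
    · exact (hαB'.2 α hαB.1 hle).symm
    · exact hαB.2 α' hαB'.1 hle
  rw [add_left_cancel (hdec.symm.trans hdec')]

end Paper
end

section
/- Let J be a strongly stable ideal. If x^ε is a monomial not in J and x^ε · x^δ belongs to J for some monomial x^δ, then in the canonical decomposition x^{ε+δ} = x^α ∗_J x^η (with x^α ∈ B_J and min(x^α) ≥ max(x^η)) one has x^η <_Lex x^δ; moreover if |δ| = |η| then x^η <_B x^δ. -/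
open MvPolynomial

namespace Paper

variable {N : ℕ}

/-- `a <_Lex b` for exponent vectors, where larger variables (larger indices)
are more significant. -/
def LexLt {N : ℕ} (a b : Mon N) : Prop :=
  ∃ k : Fin N, a k < b k ∧ ∀ j, k < j → a j = b j

/-!
Since `x^α ∈ J` and `x^ε ∉ J`, `α ≰ ε`. If `x^δ` were `≤_Lex x^η`, then at the leading index `k`
where they differ `η` is positive, so `min(x^α) ≥ max(x^η)` puts the support of `α` in the
variables `≥ k`, and comparing `ε + δ = α + η` coordinatewise would give `α ≤ ε`.

For the Borel part, write `T_k(u) = ∑_{i ≥ k} u_i`. The star condition makes `α` sit entirely in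
`T_k` whenever `η` meets it, which yields `T_k(η) ≤ T_k(δ)` for all `k` once `|η| = |δ|`. Such a
tail-dominated monomial is reached from `η` by adjacent moves `x_{k-1} ↦ x_k`, each performed at
the least `k` with `T_k(η) < T_k(δ)`.
-/

lemma MonIdeal.isUpperSet {J : Set (Mon N)} (hJ : MonIdeal J) : IsUpperSet J :=
  fun a b hab ha => by simpa [add_tsub_cancel_of_le hab] using hJ a ha (b - a)

lemma lexLt_iff_toColex_lt {a b : Mon N} : LexLt a b ↔ toColex a < toColex b := by
  rw [Finsupp.Colex.lt_iff]
  exact exists_congr fun k => and_comm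

lemma LexLt.ne {a b : Mon N} (h : LexLt a b) : a ≠ b := by
  rintro rfl
  obtain ⟨k, hk, -⟩ := h
  exact lt_irrefl _ hk

def tailDeg (k : ℕ) (u : Mon N) : ℕ := ∑ i : Fin N with k ≤ i.val, u i

lemma tailDeg_add (k : ℕ) (u v : Mon N) : tailDeg k (u + v) = tailDeg k u + tailDeg k v := by
  simp [tailDeg, Finset.sum_add_distrib]

lemma tailDeg_zero (u : Mon N) : tailDeg 0 u = mdeg u := by
  simp [tailDeg, mdeg, Finsupp.sum_fintype]

lemma tailDeg_le_mdeg (k : ℕ) (u : Mon N) : tailDeg k u ≤ mdeg u := by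
  rw [← tailDeg_zero]
  exact Finset.sum_le_sum_of_subset (Finset.monotone_filter_right _ fun _ _ _ => Nat.zero_le _)

lemma tailDeg_of_le {k : ℕ} (hk : N ≤ k) (u : Mon N) : tailDeg k u = 0 :=
  Finset.sum_eq_zero fun i hi => absurd (Finset.mem_filter.1 hi).2 (by omega)

lemma tailDeg_eq_add_tailDeg_succ (i : Fin N) (u : Mon N) :
    tailDeg i u = u i + tailDeg (i + 1) u := by
  have : Finset.univ.filter (fun j : Fin N => i.val ≤ j.val) =
      insert i (Finset.univ.filter fun j : Fin N => i.val + 1 ≤ j.val) := by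
    ext j
    simp [Nat.le_iff_lt_or_eq, Fin.ext_iff, or_comm, eq_comm]
  rw [tailDeg, this, Finset.sum_insert (by simp)]
  rfl

lemma tailDeg_single (k : ℕ) (j : Fin N) (n : ℕ) :
    tailDeg k (Finsupp.single j n) = if k ≤ j then n else 0 := by
  simp [tailDeg, Finsupp.single_apply]

lemma eq_of_tailDeg_eq {a b : Mon N} (h : ∀ k, tailDeg k a = tailDeg k b) : a = b := by
  ext i
  have := tailDeg_eq_add_tailDeg_succ i a
  have := tailDeg_eq_add_tailDeg_succ i b
  have := h i
  have := h (i + 1)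
  omega

lemma exists_borelStep_tailDeg {a b : Mon N} (hdeg : mdeg a = mdeg b)
    (hdom : ∀ k, tailDeg k a ≤ tailDeg k b) (hne : a ≠ b) :
    ∃ a' k, BorelStep a a' ∧ k ≠ 0 ∧ k < N ∧ tailDeg k a < tailDeg k b ∧
      ∀ m, tailDeg m a' = tailDeg m a + if m = k then 1 else 0 := by
  classical
  have hex : ∃ k, tailDeg k a < tailDeg k b := by
    by_contra! h
    exact hne (eq_of_tailDeg_eq fun k => (hdom k).antisymm (h k))
  have hk : tailDeg (Nat.find hex) a < tailDeg (Nat.find hex) b := Nat.find_spec hex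
  obtain ⟨i, hi⟩ : ∃ i, Nat.find hex = i + 1 := by
    refine Nat.exists_eq_succ_of_ne_zero fun h => ?_
    rw [h, tailDeg_zero, tailDeg_zero] at hk
    omega
  have hprev : tailDeg i a = tailDeg i b :=
    (hdom i).antisymm (not_lt.1 (Nat.find_min hex (by omega)))
  rw [hi] at hk
  have hiN : i + 1 < N := by
    by_contra! hN
    simp [tailDeg_of_le hN] at hk
  let i' : Fin N := ⟨i, by omega⟩
  let j' : Fin N := ⟨i + 1, hiN⟩
  -- the equal tails at `i` and the deficit at `i + 1` force `a i > b i`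
  have hai : 1 ≤ a i' := by
    have := tailDeg_eq_add_tailDeg_succ i' a
    have := tailDeg_eq_add_tailDeg_succ i' b
    simp only [i'] at *
    omega
  have ha : a - Finsupp.single i' 1 + Finsupp.single i' 1 = a :=
    tsub_add_cancel_of_le (Finsupp.single_le_iff.2 hai)
  refine ⟨a - Finsupp.single i' 1 + Finsupp.single j' 1, i + 1,
    ⟨i', j', Fin.lt_def.2 (by simp [i', j']), by rw [add_right_comm, ha]⟩, by omega, hiN, hk,
    fun m => ?_⟩
  have := congrArg (tailDeg m) ha
  simp only [tailDeg_add, tailDeg_single, i', j'] at this ⊢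
  split_ifs at this ⊢ <;> omega

theorem reflTransGen_borelStep_of_tailDeg_le {a b : Mon N} (hdeg : mdeg a = mdeg b)
    (hdom : ∀ k, tailDeg k a ≤ tailDeg k b) : Relation.ReflTransGen BorelStep a b := by
  by_cases hab : a = b
  · exact hab ▸ .refl
  obtain ⟨a', k, hstep, hk0, hkN, hk, htail⟩ := exists_borelStep_tailDeg hdeg hdom hab
  have hdom' : ∀ m, tailDeg m a' ≤ tailDeg m b := fun m => by
    rw [htail]
    split_ifs with hm
    · exact hm ▸ hk
    · simpa using hdom m
  have hdeg' : mdeg a' = mdeg b := by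
    rw [← tailDeg_zero, htail, if_neg (Ne.symm hk0), add_zero, tailDeg_zero, hdeg]
  exact .head hstep (reflTransGen_borelStep_of_tailDeg_le hdeg' hdom')
termination_by ∑ m ∈ Finset.range N, (tailDeg m b - tailDeg m a)
decreasing_by
  refine Finset.sum_lt_sum (fun m _ => ?_) ⟨k, Finset.mem_range.2 hkN, ?_⟩ <;>
    rw [htail] <;> split_ifs <;> omega

theorem borelLt_of_tailDeg_le {a b : Mon N} (hdeg : mdeg a = mdeg b)
    (hdom : ∀ k, tailDeg k a ≤ tailDeg k b) (hne : a ≠ b) : BorelLt a b :=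
  (Relation.reflTransGen_iff_eq_or_transGen.1
    (reflTransGen_borelStep_of_tailDeg_le hdeg hdom)).resolve_left hne.symm

namespace StarCond

variable {ε δ α η : Mon N}

lemma le_of_lexLt (hstar : StarCond α η) (hdec : ε + δ = α + η) (hlex : LexLt δ η) : α ≤ ε := by
  obtain ⟨k, hk, hsuf⟩ := hlex
  intro m
  have hm : ε m + δ m = α m + η m := by simpa using DFunLike.congr_fun hdec m
  rcases lt_trichotomy m k with hmk | rfl | hkm
  · have : α m = 0 := by
      by_contra hα
      exact (hstar m k hα (by omega)).not_gt hmk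
    omega
  · omega
  · have := hsuf m hkm
    omega

lemma lexLt_of_not_le (hstar : StarCond α η) (hdec : ε + δ = α + η) (hle : ¬ α ≤ ε) :
    LexLt η δ := by
  rcases lt_trichotomy (toColex η) (toColex δ) with h | h | h
  · exact lexLt_iff_toColex_lt.2 h
  · rw [toColex_inj.1 h] at hdec
    exact absurd (add_right_cancel hdec).ge hle
  · exact absurd (hstar.le_of_lexLt hdec (lexLt_iff_toColex_lt.2 h)) hle

lemma tailDeg_eq_zero_or_eq_mdeg (hstar : StarCond α η) (k : ℕ) :
    tailDeg k η = 0 ∨ tailDeg k α = mdeg α := by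
  by_cases hη : ∃ j : Fin N, k ≤ j.val ∧ η j ≠ 0
  · obtain ⟨j, hkj, hj⟩ := hη
    right
    rw [← tailDeg_zero, tailDeg, tailDeg, Finset.sum_filter_of_ne fun i _ hi =>
      hkj.trans (hstar i j hi hj), Finset.sum_filter_of_ne fun _ _ _ => Nat.zero_le _]
  · push Not at hη
    exact .inl (Finset.sum_eq_zero fun j hj => hη j (Finset.mem_filter.1 hj).2)

lemma tailDeg_le (hstar : StarCond α η) (hdec : ε + δ = α + η) (hdeg : mdeg η = mdeg δ)
    (k : ℕ) : tailDeg k η ≤ tailDeg k δ := by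
  have htail := congrArg (tailDeg k) hdec
  have htotal := congrArg (tailDeg 0) hdec
  simp only [tailDeg_add, tailDeg_zero] at htail htotal
  have := tailDeg_le_mdeg k ε
  rcases hstar.tailDeg_eq_zero_or_eq_mdeg k with h | h <;> omega

end StarCond

theorem star_decomposition_lex_general {N : ℕ} {J : Set (Mon N)} (hJ : StronglyStable J)
    {ε δ α η : Mon N} (hε : ε ∉ J)
    (hα : α ∈ MinBasis J) (hdec : ε + δ = α + η) (hstar : StarCond α η) :
    LexLt η δ ∧ (mdeg η = mdeg δ → BorelLt η δ) := by
  have hlex : LexLt η δ :=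
    hstar.lexLt_of_not_le hdec fun hle => hε (hJ.1.isUpperSet hle hα.1)
  exact ⟨hlex, fun hdeg => borelLt_of_tailDeg_le hdeg (hstar.tailDeg_le hdec hdeg) hlex.ne⟩

/-- if `x^ε ∉ J` and `x^ε · x^δ ∈ J`, then in the decomposition
`x^{ε+δ} = x^α ∗_J x^η` one has `x^η <_Lex x^δ`; and if `|δ| = |η|` then `x^η <_B x^δ`. -/
theorem star_decomposition_lex {N : ℕ} {J : Set (Mon N)} (hJ : StronglyStable J)
    {ε δ α η : Mon N} (hε : ε ∉ J) (hεδ : ε + δ ∈ J)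
    (hα : α ∈ MinBasis J) (hdec : ε + δ = α + η) (hstar : StarCond α η) :
    LexLt η δ ∧ (mdeg η = mdeg δ → BorelLt η δ) :=
  star_decomposition_lex_general hJ hε hα hdec hstar

end Paper
end

section
/- Let J be a strongly stable ideal in S, m ≥ sat(J) an integer, G a J-marked set, g a homogeneous polynomial of degree ℓ ≥ m, and V_ℓ = {x^δ f_α : f_α ∈ G, |δ + α| = ℓ, x^δ x^α = x^α ∗_J x^δ}. Then g ∈ ⟨V_ℓ⟩ if and only if x_0 · g ∈ ⟨V_{ℓ+1}⟩. -/
/-!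
Multiplication by `x_0` maps `V_ℓ` into `V_{ℓ+1}`, which gives one direction. Conversely, write
`x_0 p = ∑ c_{α,δ} x^δ f_α` over `V_{ℓ+1}`; it suffices that `x_0` divides every `x^δ` occurring
there, for then `p = ∑ c_{α,δ} (x^δ / x_0) f_α ∈ ⟨V_ℓ⟩`. Otherwise take such a pair with
`x_0 ∤ x^δ` and `δ` maximal in the colex order. As `ℓ + 1` exceeds the satiety and `J` is strongly
stable, `x_0 ∤ x^α` either, so the head term `x^(α+δ)` does not occur in `x_0 p`. Any other
`x^δ' f_α'` reaches `x^(α+δ)` only through a tail term of `f_α'`, which forces `x^δ' ∣ x^(α+δ)`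
(so `x_0 ∤ x^δ'`) and `δ <colex δ'`; hence `x^(α+δ)` has coefficient `c_{α,δ} ≠ 0` in the sum.
-/

open MvPolynomial

namespace Paper

variable {N : ℕ}

variable (K : Type) [Field K]

/-- The monomial `x^u` as a polynomial. -/
noncomputable def mono {N : ℕ} (u : Mon N) : MvPolynomial (Fin N) K :=
  MvPolynomial.monomial u (1 : K)

/-- The (actual) monomial ideal of `S` spanned by a set of monomials. -/
noncomputable def idealOf {N : ℕ} (J : Set (Mon N)) : Ideal (MvPolynomial (Fin N) K) :=
  Ideal.span (mono K '' J)

/-- The irrelevant maximal ideal `(x_0, …, x_n)`. -/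
noncomputable def irrel (N : ℕ) : Ideal (MvPolynomial (Fin N) K) :=
  Ideal.span (Set.range MvPolynomial.X)

/-- The saturation `I^sat = ⋃_j (I : (x_0,…,x_n)^j)`. -/
noncomputable def satIdeal {N : ℕ} (I : Ideal (MvPolynomial (Fin N) K)) :
    Ideal (MvPolynomial (Fin N) K) :=
  ⨆ k : ℕ, Submodule.colon I ((irrel K N ^ k : Ideal (MvPolynomial (Fin N) K)) : Set (MvPolynomial (Fin N) K))

/-- The satiety of a homogeneous ideal: the smallest `m` such that
`I_t = (I^sat)_t` for all `t ≥ m`. -/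
noncomputable def satiety {N : ℕ} (I : Ideal (MvPolynomial (Fin N) K)) : ℕ :=
  sInf {m | ∀ t, m ≤ t → ∀ p : MvPolynomial (Fin N) K,
    p.IsHomogeneous t → (p ∈ I ↔ p ∈ satIdeal K I)}

/-- The saturation of a combinatorial monomial ideal. -/
def msat {N : ℕ} (J : Set (Mon N)) : Set (Mon N) :=
  {u | ∃ k : ℕ, ∀ d : Mon N, mdeg d = k → u + d ∈ J}

/-- The satiety of a combinatorial monomial ideal. -/
noncomputable def msatiety {N : ℕ} (J : Set (Mon N)) : ℕ :=
  sInf {m | ∀ u : Mon N, m ≤ mdeg u → (u ∈ J ↔ u ∈ msat J)}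

/-- A homogeneous `J`-marked set, given as a function assigning to each
`x^α ∈ B_J` the marked polynomial `f_α` with head term `x^α`. -/
def SMarkedSet {N : ℕ} (J : Set (Mon N)) (g : Mon N → MvPolynomial (Fin N) K) : Prop :=
  ∀ α ∈ MinBasis J,
    MvPolynomial.coeff α (g α) = 1 ∧
    (g α).IsHomogeneous (mdeg α) ∧
    ∀ u ∈ (g α).support, u ≠ α → u ∉ J

/-- `V_ℓ = {x^δ f_α : f_α ∈ G, |δ+α| = ℓ, x^δ x^α = x^α ∗_J x^δ}`. -/
def Vset {N : ℕ} (J : Set (Mon N)) (g : Mon N → MvPolynomial (Fin N) K) (ℓ : ℕ) :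
    Set (MvPolynomial (Fin N) K) :=
  {q | ∃ α δ : Mon N, α ∈ MinBasis J ∧ StarCond α δ ∧ mdeg α + mdeg δ = ℓ ∧
    q = mono K δ * g α}

section Monomials

variable {J : Set (Mon N)}

lemma mdeg_eq_degree (u : Mon N) : mdeg u = u.degree := rfl

lemma StarCond.mono_right {a d d' : Mon N} (h : StarCond a d) (hle : d' ≤ d) : StarCond a d' :=
  fun i j hi hj => h i j hi fun h0 => hj (Nat.eq_zero_of_le_zero (h0 ▸ hle j))

lemma MonIdeal.mem_of_le (hJ : MonIdeal J) {u v : Mon N} (hu : u ∈ J)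
    (huv : u ≤ v) : v ∈ J := by
  simpa [add_tsub_cancel_of_le huv] using hJ u hu (v - u)

lemma subset_msat (J : Set (Mon N)) : J ⊆ msat J :=
  fun u hu => ⟨0, fun d hd => by
    rw [mdeg_eq_degree, Finsupp.degree_eq_zero_iff] at hd
    simpa [hd] using hu⟩

lemma MonIdeal.eventually_add_mem_of_mem_msat (hJ : MonIdeal J) {v : Mon N}
    (hv : v ∈ msat J) : ∀ᶠ m in Filter.atTop, ∀ d, m ≤ mdeg (v + d) → v + d ∈ J := by
  obtain ⟨k, hk⟩ := hv
  refine Filter.eventually_atTop.2 ⟨mdeg v + k, fun m hm d hd => ?_⟩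
  simp only [mdeg_eq_degree, map_add] at hm hd
  obtain ⟨d', hd'd, hd'⟩ := Finsupp.exists_le_degree_eq d k (by omega)
  exact hJ.mem_of_le (hk d' hd') (add_le_add_right hd'd v)

/-- By Dickson's lemma `msat J` has finitely many minimal elements; beyond a common degree each
of them times any monomial lies in `J`. -/
lemma MonIdeal.exists_mem_of_mem_msat (hJ : MonIdeal J) :
    ∃ m, ∀ u ∈ msat J, m ≤ mdeg u → u ∈ J := by
  have hfin : {v | Minimal (· ∈ msat J) v}.Finite :=
    (setOfPred_minimal_antichain _).finite_of_partiallyWellOrderedOn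
      (Set.isPWO_of_wellQuasiOrderedLE _)
  obtain ⟨m, hm⟩ := Filter.eventually_atTop.1 <| (Filter.eventually_all_finite hfin).2
    fun v hv => hJ.eventually_add_mem_of_mem_msat hv.prop
  refine ⟨m, fun u hu hmu => ?_⟩
  obtain ⟨v, hvu, hv⟩ := (Set.isPWO_of_wellQuasiOrderedLE (msat J)).exists_le_minimal hu
  rw [← add_tsub_cancel_of_le hvu] at hmu ⊢
  exact hm m le_rfl v hv _ hmu

lemma MonIdeal.mem_of_mem_msat (hJ : MonIdeal J) {u : Mon N}
    (hu : u ∈ msat J) (hdeg : msatiety J ≤ mdeg u) : u ∈ J := by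
  obtain ⟨m, hm⟩ := hJ.exists_mem_of_mem_msat
  have hne : {m | ∀ u : Mon N, m ≤ mdeg u → (u ∈ J ↔ u ∈ msat J)}.Nonempty :=
    ⟨m, fun u hmu => ⟨fun h => subset_msat J h, fun h => hm u h hmu⟩⟩
  exact ((Nat.sInf_mem hne) u hdeg).2 hu

end Monomials

section StarDecomposition

variable {J : Set (Mon N)}

lemma eq_of_add_eq_of_starCond {α δ α' δ' : Mon N} (hα : α ∈ MinBasis J) (hα' : α' ∈ MinBasis J)
    (hsc : StarCond α δ) (hsc' : StarCond α' δ') (he : α + δ = α' + δ') : α = α' ∧ δ = δ' := by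
  have happ : ∀ i, α i + δ i = α' i + δ' i := fun i => by simpa using congrArg (· i) he
  have hcomp : α ≤ α' ∨ α' ≤ α := by
    by_contra! h
    obtain ⟨i, hi⟩ : ∃ i, α' i < α i := by simpa [Finsupp.le_def] using h.1
    obtain ⟨j, hj⟩ : ∃ j, α j < α' j := by simpa [Finsupp.le_def] using h.2
    have hij : i ≤ j := hsc' j i (by omega) (by have := happ i; omega)
    have hji : j ≤ i := hsc i j (by omega) (by have := happ j; omega)
    have := le_antisymm hij hji
    subst this
    omega
  have hαα' : α = α' := hcomp.elim (hα'.2 α hα.1) fun h => (hα.2 α' hα'.1 h).symm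
  subst hαα'
  exact ⟨rfl, add_left_cancel he⟩

/-- Otherwise `a ≤ b`, because `d` lives on the variables up to `min(x^a)`. -/
lemma MonIdeal.toColex_lt_of_add_eq {a d d' b : Mon N} (hJ : MonIdeal J) (ha : a ∈ J)
    (hsc : StarCond a d) (hb : b ∉ J) (he : a + d = d' + b) : toColex d < toColex d' := by
  have happ : ∀ i, a i + d i = d' i + b i := fun i => by simpa using congrArg (· i) he
  rcases lt_trichotomy (toColex d) (toColex d') with h | h | h
  · exact h
  · obtain rfl : d = d' := toColex_inj.mp h
    exact absurd (add_left_cancel ((add_comm a d).symm.trans he) ▸ ha) hb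
  · obtain ⟨k, htop, hk⟩ := Finsupp.Colex.lt_iff.mp h
    simp only [ofColex_toColex] at htop hk
    refine absurd (hJ.mem_of_le ha fun i => ?_) hb
    have := happ i
    rcases lt_trichotomy i k with hik | rfl | hik
    · have : a i = 0 := by_contra fun hai => absurd (hsc i k hai (by omega)) (not_le.2 hik)
      omega
    · omega
    · have := htop i hik
      omega

end StarDecomposition

section StronglyStable

variable {n : ℕ} {J : Set (Mon (n + 1))}

lemma StarCond.single_zero_add {α δ : Mon (n + 1)} (h : StarCond α δ) :
    StarCond α (Finsupp.single 0 1 + δ) := fun i j hi hj => by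
  rcases eq_or_ne j 0 with rfl | hj0
  · exact Fin.zero_le i
  · exact h i j hi (by simpa [Finsupp.single_apply, hj0.symm] using hj)

lemma StronglyStable.mem_msat_of_add_single_zero_mem (hss : StronglyStable J) {u : Mon (n + 1)}
    (hu : u + Finsupp.single 0 1 ∈ J) : u ∈ msat J := by
  refine ⟨1, fun d hd => ?_⟩
  obtain ⟨i, rfl⟩ : d ∈ Set.range fun i => Finsupp.single i 1 := by
    rwa [Finsupp.range_single_one]
  rcases eq_or_ne i 0 with rfl | hi
  · exact hu
  · exact hss.2 _ hu _ <| .single ⟨0, i, Fin.pos_of_ne_zero hi, by abel⟩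

/-- Dividing such a generator by `x_0` would give an element of `msat J` of degree at least the
satiety, hence of `J`. -/
lemma StronglyStable.apply_zero_eq_zero_of_mem_minBasis (hss : StronglyStable J)
    {α : Mon (n + 1)} (hα : α ∈ MinBasis J) (hdeg : msatiety J < mdeg α) : α 0 = 0 := by
  by_contra h0
  have hu : α - Finsupp.single 0 1 + Finsupp.single 0 1 = α :=
    tsub_add_cancel_of_le (Finsupp.single_le_iff.2 (Nat.one_le_iff_ne_zero.2 h0))
  have hdeg' : mdeg α = mdeg (α - Finsupp.single 0 1) + 1 := by
    conv_lhs => rw [← hu]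
    simp [mdeg_eq_degree]
  have huJ : α - Finsupp.single 0 1 ∈ J :=
    hss.1.mem_of_mem_msat (hss.mem_msat_of_add_single_zero_mem (hu.symm ▸ hα.1)) (by omega)
  have h := DFunLike.congr_fun (hα.2 _ huJ tsub_le_self) 0
  rw [Finsupp.tsub_apply, Finsupp.single_eq_same] at h
  omega

lemma StronglyStable.add_apply_zero_eq_zero (hss : StronglyStable J) {α δ : Mon (n + 1)}
    (hα : α ∈ MinBasis J) (hsc : StarCond α δ) (hδ : δ 0 = 0)
    (hdeg : msatiety J < mdeg α + mdeg δ) : (α + δ) 0 = 0 := by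
  suffices α 0 = 0 by simp [this, hδ]
  by_contra h0
  have : δ = 0 := Finsupp.ext fun j => by
    by_contra hj
    exact hj (nonpos_iff_eq_zero.mp (hsc 0 j h0 hj) ▸ hδ)
  subst this
  exact h0 (hss.apply_zero_eq_zero_of_mem_minBasis hα (by simpa [mdeg_eq_degree] using hdeg))

end StronglyStable

section MarkedSet

variable {J : Set (Mon N)} {g : Mon N → MvPolynomial (Fin N) K}

lemma SMarkedSet.coeff_add_mono_mul (hg : SMarkedSet K J g) {α : Mon N} (hα : α ∈ MinBasis J)
    (δ : Mon N) : coeff (α + δ) (mono K δ * g α) = 1 := by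
  rw [mono, coeff_monomial_mul', if_pos le_add_self, add_tsub_cancel_right, (hg α hα).1, one_mul]

/-- Unless `(α', δ') = (α, δ)`, the monomial `x^(α + δ)` can only arise in `x^δ' f_α'` from a
tail term of `f_α'`, which lies outside `J`. -/
lemma SMarkedSet.eq_or_toColex_lt_of_coeff_ne_zero (hg : SMarkedSet K J g) (hJ : MonIdeal J)
    {α δ α' δ' : Mon N} (hα : α ∈ MinBasis J) (hα' : α' ∈ MinBasis J) (hsc : StarCond α δ)
    (hsc' : StarCond α' δ') (h : coeff (α + δ) (mono K δ' * g α') ≠ 0) :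
    (α', δ') = (α, δ) ∨ δ' ≤ α + δ ∧ toColex δ < toColex δ' := by
  rw [mono, coeff_monomial_mul'] at h
  have hle : δ' ≤ α + δ := by_contra fun hle => h (if_neg hle)
  rw [if_pos hle, one_mul, ← mem_support_iff] at h
  have he : α + δ = δ' + (α + δ - δ') := (add_tsub_cancel_of_le hle).symm
  by_cases hhead : α + δ - δ' = α'
  · obtain ⟨rfl, rfl⟩ := eq_of_add_eq_of_starCond hα' hα hsc' hsc (by rw [add_comm, ← hhead, ← he])
    exact .inl rfl
  · exact .inr ⟨hle, hJ.toColex_lt_of_add_eq hα.1 hsc ((hg α' hα').2.2 _ h hhead) he⟩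

end MarkedSet

section Span

/-- Indexing `V_ℓ` by the pairs `(α, δ)` writes its span as the range of
`Finsupp.linearCombination`. -/
noncomputable def markedMul (g : Mon N → MvPolynomial (Fin N) K) (w : Mon N × Mon N) :
    MvPolynomial (Fin N) K :=
  mono K w.2 * g w.1

def starPairs (J : Set (Mon N)) (ℓ : ℕ) : Set (Mon N × Mon N) :=
  {w | w.1 ∈ MinBasis J ∧ StarCond w.1 w.2 ∧ mdeg w.1 + mdeg w.2 = ℓ}

lemma Vset_eq_image {J : Set (Mon N)} {g : Mon N → MvPolynomial (Fin N) K} {ℓ : ℕ} :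
    Vset K J g ℓ = markedMul K g '' starPairs J ℓ := by
  ext q
  simp [Vset, starPairs, markedMul, eq_comm, and_assoc]

variable {n : ℕ} {J : Set (Mon (n + 1))} {g : Mon (n + 1) → MvPolynomial (Fin (n + 1)) K}

lemma markedMul_single_zero_add (α δ : Mon (n + 1)) :
    markedMul K g (α, Finsupp.single 0 1 + δ) = X 0 * markedMul K g (α, δ) := by
  rw [markedMul, markedMul, mono, mono, ← mul_assoc, X, monomial_mul, one_mul]

lemma map_mulLeft_X_zero_span_le (ℓ : ℕ) :
    (Submodule.span K (markedMul K g '' starPairs J ℓ)).map (LinearMap.mulLeft K (X 0)) ≤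
      Submodule.span K (markedMul K g '' starPairs J (ℓ + 1)) := by
  rw [Submodule.map_span, ← Set.image_comp]
  refine Submodule.span_mono ?_
  rintro _ ⟨⟨α, δ⟩, ⟨hα, hsc, hdeg⟩, rfl⟩
  refine ⟨(α, Finsupp.single 0 1 + δ), ⟨hα, hsc.single_zero_add, ?_⟩,
    markedMul_single_zero_add K α δ⟩
  simp only [mdeg_eq_degree, map_add, Finsupp.degree_single] at hdeg ⊢
  omega

lemma linearCombination_mem_map_mulLeft_X_zero {ℓ : ℕ} {l : Mon (n + 1) × Mon (n + 1) →₀ K}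
    (hl : l ∈ Finsupp.supported K K (starPairs J (ℓ + 1))) (h0 : ∀ w ∈ l.support, w.2 0 ≠ 0) :
    Finsupp.linearCombination K (markedMul K g) l ∈
      (Submodule.span K (markedMul K g '' starPairs J ℓ)).map (LinearMap.mulLeft K (X 0)) := by
  rw [Finsupp.linearCombination_apply]
  refine Submodule.sum_mem _ fun ⟨α, δ⟩ hw => Submodule.smul_mem _ _ ?_
  obtain ⟨hα, hsc, hdeg⟩ : α ∈ MinBasis J ∧ StarCond α δ ∧ mdeg α + mdeg δ = ℓ + 1 :=
    (Finsupp.mem_supported K l).1 hl hw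
  have hδ : Finsupp.single 0 1 + (δ - Finsupp.single 0 1) = δ :=
    add_tsub_cancel_of_le (Finsupp.single_le_iff.2 (Nat.one_le_iff_ne_zero.2 (h0 _ hw)))
  refine ⟨markedMul K g (α, δ - Finsupp.single 0 1),
    Submodule.subset_span ⟨_, ⟨hα, hsc.mono_right tsub_le_self, ?_⟩, rfl⟩, ?_⟩
  · rw [← hδ] at hdeg
    simp only [mdeg_eq_degree, map_add, Finsupp.degree_single] at hdeg ⊢
    omega
  · rw [LinearMap.mulLeft_apply, ← markedMul_single_zero_add, hδ]

theorem apply_zero_ne_zero_of_linearCombination_eq_X_zero_mul (hss : StronglyStable J)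
    (hg : SMarkedSet K J g) {ℓ : ℕ} (hℓ : msatiety J ≤ ℓ) {l : Mon (n + 1) × Mon (n + 1) →₀ K}
    (hl : l ∈ Finsupp.supported K K (starPairs J (ℓ + 1))) {p : MvPolynomial (Fin (n + 1)) K}
    (hp : Finsupp.linearCombination K (markedMul K g) l = X 0 * p) :
    ∀ w ∈ l.support, w.2 0 ≠ 0 := by
  classical
  by_contra! hA
  obtain ⟨⟨α, δ⟩, hwA, hmax⟩ := (l.support.filter (·.2 0 = 0)).exists_max_image
    (fun w => toColex w.2) (by simpa [Finset.filter_nonempty_iff] using hA)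
  obtain ⟨hw, hδ⟩ := Finset.mem_filter.1 hwA
  obtain ⟨hα, hsc, hdeg⟩ : α ∈ MinBasis J ∧ StarCond α δ ∧ mdeg α + mdeg δ = ℓ + 1 :=
    (Finsupp.mem_supported K l).1 hl hw
  have hγ : (α + δ) 0 = 0 := hss.add_apply_zero_eq_zero hα hsc hδ (by omega)
  have hcoeff : coeff (α + δ) (Finsupp.linearCombination K (markedMul K g) l) = l (α, δ) := by
    rw [Finsupp.linearCombination_apply, Finsupp.sum, coeff_sum, Finset.sum_eq_single (α, δ)]
    · rw [coeff_smul, markedMul, hg.coeff_add_mono_mul K hα, smul_eq_mul, mul_one]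
    · rintro ⟨α', δ'⟩ hv hne
      rw [coeff_smul, smul_eq_mul, markedMul]
      refine mul_eq_zero_of_right _ (by_contra fun hc => ?_)
      obtain ⟨hα', hsc', -⟩ := (Finsupp.mem_supported K l).1 hl hv
      rcases hg.eq_or_toColex_lt_of_coeff_ne_zero K hss.1 hα hα' hsc hsc' hc with heq | ⟨hle, hlt⟩
      · exact hne heq
      · have hδ' : δ' 0 = 0 := by simpa [hγ] using hle 0
        exact (hmax _ (Finset.mem_filter.2 ⟨hv, hδ'⟩)).not_gt hlt
    · exact fun h => (h hw).elim
  have hX : coeff (α + δ) (X 0 * p) = 0 := by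
    rw [coeff_X_mul', if_neg (by simpa using hγ)]
  exact Finsupp.mem_support_iff.1 hw (hcoeff.symm.trans (hp ▸ hX))

end Span

theorem mem_span_V_iff_xzero_mul_general {n : ℕ} (K : Type) [Field K]
    (J : Set (Mon (n + 1))) (g : Mon (n + 1) → MvPolynomial (Fin (n + 1)) K)
    (hss : StronglyStable J) (hms : SMarkedSet K J g)
    (m ℓ : ℕ) (hm : msatiety J ≤ m) (hℓ : m ≤ ℓ)
    (p : MvPolynomial (Fin (n + 1)) K) :
    p ∈ Submodule.span K (Vset K J g ℓ) ↔
      MvPolynomial.X 0 * p ∈ Submodule.span K (Vset K J g (ℓ + 1)) := by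
  rw [Vset_eq_image, Vset_eq_image]
  refine ⟨fun hp => map_mulLeft_X_zero_span_le K ℓ (Submodule.mem_map_of_mem hp), fun h => ?_⟩
  obtain ⟨l, hl, hlp⟩ := (Finsupp.mem_span_image_iff_linearCombination K).1 h
  have h0 := apply_zero_ne_zero_of_linearCombination_eq_X_zero_mul K hss hms (hm.trans hℓ) hl hlp
  obtain ⟨q, hq, hqp⟩ := Submodule.mem_map.1 (linearCombination_mem_map_mulLeft_X_zero K hl h0)
  rwa [← mul_left_cancel₀ (X_ne_zero 0) (hqp.trans hlp)]

/-- for `m ≥ sat J`, a `J`-marked set `G` and a homogeneous `g`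
of degree `ℓ ≥ m`, one has `g ∈ ⟨V_ℓ⟩ ↔ x_0 · g ∈ ⟨V_{ℓ+1}⟩`. -/
theorem mem_span_V_iff_xzero_mul {n : ℕ} (K : Type) [Field K]
    (J : Set (Mon (n + 1))) (g : Mon (n + 1) → MvPolynomial (Fin (n + 1)) K)
    (hss : StronglyStable J) (hms : SMarkedSet K J g)
    (m ℓ : ℕ) (hm : msatiety J ≤ m) (hℓ : m ≤ ℓ)
    (p : MvPolynomial (Fin (n + 1)) K) (hp : p.IsHomogeneous ℓ) :
    p ∈ Submodule.span K (Vset K J g ℓ) ↔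
      MvPolynomial.X 0 * p ∈ Submodule.span K (Vset K J g (ℓ + 1)) :=
  mem_span_V_iff_xzero_mul_general K J g hss hms m ℓ hm hℓ p

end Paper
end

section
/- Let 𝔧 be a strongly stable ideal in R = K[x_1,...,x_n] and 𝔊 a non-homogeneous 𝔧-marked set. Then the 𝔊_∗-reduction relation is Noetherian, and for every polynomial g in R there exists a reduced polynomial ḡ (i.e., supp(ḡ) ∩ 𝔧 = ∅) such that g reduces to ḡ by 𝔊_∗. -/
open MvPolynomial

namespace Paper

variable {N : ℕ}

variable (K : Type) [Field K]

/-- A non-homogeneous `𝔧`-marked set: marked polynomials `f_α` with pairwise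
distinct head terms forming `B_𝔧` and tails supported outside `𝔧`. -/
def NHMarkedSet {N : ℕ} (𝔧 : Set (Mon N)) (f : Mon N → MvPolynomial (Fin N) K) : Prop :=
  ∀ α ∈ MinBasis 𝔧,
    MvPolynomial.coeff α (f α) = 1 ∧
    ∀ u ∈ (f α).support, u ≠ α → u ∉ 𝔧

/-- One step of the `𝔊_∗`-reduction: the monomial `x^γ = x^α ∗_𝔧 x^η` of the
support of `g` is replaced by `x^η · T(f_α)`. -/
def RStep {N : ℕ} (𝔧 : Set (Mon N)) (f : Mon N → MvPolynomial (Fin N) K)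
    (g g₁ : MvPolynomial (Fin N) K) : Prop :=
  ∃ γ α η : Mon N, γ ∈ g.support ∧ γ ∈ 𝔧 ∧ α ∈ MinBasis 𝔧 ∧ γ = α + η ∧
    StarCond α η ∧
    g₁ = g - MvPolynomial.coeff γ g • (mono K η * f α)

/-- The `𝔊_∗`-reduction relation (reflexive-transitive closure of `RStep`). -/
def Reduces {N : ℕ} (𝔧 : Set (Mon N)) (f : Mon N → MvPolynomial (Fin N) K) :
    MvPolynomial (Fin N) K → MvPolynomial (Fin N) K → Prop :=
  Relation.ReflTransGen (RStep K 𝔧 f)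

/-- `g` is reduced: `supp(g) ∩ 𝔧 = ∅`. -/
def IsReducedPoly {N : ℕ} (𝔧 : Set (Mon N)) (g : MvPolynomial (Fin N) K) : Prop :=
  ∀ u ∈ g.support, u ∉ 𝔧

/-- A `[𝔧,m]`-marked set: a n.h. `𝔧`-marked set whose tails are supported in
`N(𝔧)_{≤ max{m,|α|}}`. -/
def JmMarkedSet {N : ℕ} (𝔧 : Set (Mon N)) (m : ℕ)
    (f : Mon N → MvPolynomial (Fin N) K) : Prop :=
  ∀ α ∈ MinBasis 𝔧,
    MvPolynomial.coeff α (f α) = 1 ∧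
    ∀ u ∈ (f α).support, u ≠ α → (u ∉ 𝔧 ∧ mdeg u ≤ max m (mdeg α))

/-- The ideal `(𝔊)` generated by a marked set. -/
noncomputable def idealG {N : ℕ} (𝔧 : Set (Mon N))
    (f : Mon N → MvPolynomial (Fin N) K) : Ideal (MvPolynomial (Fin N) K) :=
  Ideal.span (f '' MinBasis 𝔧)

/-- A `[𝔧,m]`-completion of `𝔊`: marked polynomials `f_β ∈ (𝔊)` with pairwise
distinct head terms the monomials of `𝔧_{≤m} \ B_𝔧` and tails in `N(𝔧)_{≤m}`. -/
def IsCompletion {N : ℕ} (𝔧 : Set (Mon N)) (m : ℕ)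
    (f h : Mon N → MvPolynomial (Fin N) K) : Prop :=
  ∀ β : Mon N, β ∈ 𝔧 → mdeg β ≤ m → β ∉ MinBasis 𝔧 →
    h β ∈ idealG K 𝔧 f ∧
    MvPolynomial.coeff β (h β) = 1 ∧
    ∀ u ∈ (h β).support, u ≠ β → (u ∉ 𝔧 ∧ mdeg u ≤ m)

/-- `g'` is a `[𝔧,m]`-reduced form of `g` modulo `(𝔊)`. -/
def IsReducedForm {N : ℕ} (𝔧 : Set (Mon N)) (m : ℕ)
    (f : Mon N → MvPolynomial (Fin N) K)
    (g g' : MvPolynomial (Fin N) K) : Prop :=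
  (∀ u ∈ g'.support, u ∉ 𝔧 ∧ mdeg u ≤ max m g.totalDegree) ∧
  g - g' ∈ idealG K 𝔧 f

/-- `R_{≤ t}`: the `K`-subspace of polynomials of degree at most `t`. -/
noncomputable def degLE (N : ℕ) (t : ℕ) : Submodule K (MvPolynomial (Fin N) K) where
  carrier := {g | ∀ u ∈ g.support, mdeg u ≤ t}
  zero_mem' := by simp
  add_mem' := by
    intro a b ha hb u hu
    rcases Finset.mem_union.mp (MvPolynomial.support_add hu) with h | h
    · exact ha u h
    · exact hb u h
  smul_mem' := by
    intro c a ha u hu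
    exact ha u (MvPolynomial.support_smul hu)

/-- `⟨N(𝔧)_{≤t}⟩`: the `K`-span of the monomials outside `𝔧` of degree `≤ t`. -/
noncomputable def spanNLE {N : ℕ} (𝔧 : Set (Mon N)) (t : ℕ) :
    Submodule K (MvPolynomial (Fin N) K) :=
  Submodule.span K (mono K '' {u : Mon N | u ∉ 𝔧 ∧ mdeg u ≤ t})

/-- `(𝔊)_{≤t}`: the `K`-subspace of elements of `(𝔊)` of degree `≤ t`. -/
noncomputable def GleSub {N : ℕ} (𝔧 : Set (Mon N))
    (f : Mon N → MvPolynomial (Fin N) K) (t : ℕ) :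
    Submodule K (MvPolynomial (Fin N) K) :=
  (idealG K 𝔧 f).restrictScalars K ⊓ degLE K N t

/-- A `[𝔧,m]`-marked basis: a `[𝔧,m]`-marked set with
`R_{≤t} = ⟨N(𝔧)_{≤t}⟩ ⊕ (𝔊)_{≤t}` for all `t ≥ m`. -/
def JmMarkedBasis {N : ℕ} (𝔧 : Set (Mon N)) (m : ℕ)
    (f : Mon N → MvPolynomial (Fin N) K) : Prop :=
  JmMarkedSet K 𝔧 m f ∧
  ∀ t, m ≤ t →
    Disjoint (spanNLE K 𝔧 t) (GleSub K 𝔧 f t) ∧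
    spanNLE K 𝔧 t ⊔ GleSub K 𝔧 f t = degLE K N t

/-!
Measure a monomial `x^γ ∈ 𝔧` by the colex-largest `η` among its star decompositions
`x^γ = x^α ∗ x^η`. A step at `x^γ = x^α ∗_𝔧 x^η` deletes `γ` and creates only monomials `η + u`
with `u ∉ 𝔧`, and the star condition forces every star cofactor of such a monomial to be
colex-smaller than `η`. Hence the multiset of the measures of `supp(g) ∩ 𝔧` drops in the
Dershowitz–Manna order, which is well founded because colex on `ℕ^n` is. Since in a strongly
stable ideal every monomial has a star decomposition, a polynomial that is not reduced can always
make a step, and well-founded induction yields a reduced form.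
-/

open Finset Finsupp

lemma isDershowitzMannaLT_map_val {α β : Type*} [Preorder α] {s t : Finset β} (f : β → α)
    {z : β} (hzt : z ∈ t) (hzs : z ∉ s) (h : ∀ y ∈ s, y ∉ t → ∃ z ∈ t, z ∉ s ∧ f y < f z) :
    (s.val.map f).IsDershowitzMannaLT (t.val.map f) := by
  classical
  have hsplit (s t : Finset β) :
      s.val.map f = (s.filter (· ∈ t)).val.map f + (s.filter (· ∉ t)).val.map f := by
    rw [← Multiset.map_add, filter_val, filter_val, Multiset.filter_add_not]
  have hcomm : s.filter (· ∈ t) = t.filter (· ∈ s) := by ext; simp [and_comm]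
  refine ⟨(s.filter (· ∈ t)).val.map f, (s.filter (· ∉ t)).val.map f,
    (t.filter (· ∉ s)).val.map f, ?_, hsplit s t, hcomm ▸ hsplit t s, ?_⟩
  · intro h0
    simp only [filter_val, Multiset.empty_eq_zero, Multiset.map_eq_zero, Multiset.filter_eq_nil,
      mem_val, not_not] at h0
    exact hzs (h0 z hzt)
  · simp only [Multiset.mem_map, filter_val, Multiset.mem_filter, mem_val]
    rintro _ ⟨y, ⟨hys, hyt⟩, rfl⟩
    obtain ⟨z, hzt, hzs, hlt⟩ := h y hys hyt
    exact ⟨f z, ⟨z, ⟨hzt, hzs⟩, rfl⟩, hlt⟩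

section

variable {K} {𝔧 : Set (Mon N)} {f : Mon N → MvPolynomial (Fin N) K}

lemma borelStep_sub_single_add_single {α : Mon N} {i j : Fin N} (hij : i < j) (hi : α i ≠ 0) :
    BorelStep α (α - single i 1 + single j 1) := by
  refine ⟨i, j, hij, ?_⟩
  rw [add_right_comm, tsub_add_cancel_of_le (single_le_iff.2 (Nat.one_le_iff_ne_zero.2 hi))]

lemma toLex_sub_single_add_single_lt {α : Mon N} {i j : Fin N} (hij : i < j) (hi : α i ≠ 0) :
    toLex (α - single i 1 + single j 1) < toLex α := by
  refine Lex.lt_iff.2 ⟨i, fun k hk => ?_, ?_⟩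
  · simp [hk.ne', (hk.trans hij).ne']
  · show (α - single i 1 + single j 1 : Mon N) i < α i
    simp only [Finsupp.coe_add, coe_tsub, Pi.add_apply, Pi.sub_apply, single_eq_same,
      single_eq_of_ne hij.ne]
    omega

/-- Take `α ∣ γ` in `𝔧` lexicographically least: passing to a proper divisor or making a Borel
move `x_i ↦ x_j`, `i < j`, would decrease it. -/
theorem StronglyStable.exists_star_decomposition (hss : StronglyStable 𝔧) {γ : Mon N}
    (hγ : γ ∈ 𝔧) : ∃ α η, α ∈ MinBasis 𝔧 ∧ StarCond α η ∧ γ = α + η := by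
  classical
  obtain ⟨α, hαS, hmin⟩ := ((Iic γ).filter (· ∈ 𝔧)).exists_min_image toLex ⟨γ, by simpa⟩
  simp only [mem_filter, mem_Iic] at hαS hmin
  obtain ⟨hαγ, hα⟩ := hαS
  refine ⟨α, γ - α, ⟨hα, fun v hv hvα => ?_⟩, fun i j hi hj => ?_,
    (add_tsub_cancel_of_le hαγ).symm⟩
  · exact toLex.injective ((toLex_monotone hvα).antisymm (hmin v ⟨hvα.trans hαγ, hv⟩))
  · by_contra! hij
    have hα'γ : α - single i 1 + single j 1 ≤ γ := by
      have hαj : α j < γ j := by rw [tsub_apply] at hj; omega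
      intro k
      have := hαγ k
      simp only [Finsupp.coe_add, coe_tsub, Pi.add_apply, Pi.sub_apply, single_apply]
      split_ifs <;> subst_vars <;> omega
    exact (hmin _ ⟨hα'γ, hss.2 α hα _ (.single (borelStep_sub_single_add_single hij hi))⟩).not_gt
      (toLex_sub_single_add_single_lt hij hi)

/-- Let `t` be the largest index with `u t < α t` (it exists as `u ∉ 𝔧`). The star condition
makes `η'` vanish above `t`, so `η'` and `η` agree there, and `η' t < η t`. -/
theorem MonIdeal.toColex_lt_of_add_eq_s8 (hJ : MonIdeal 𝔧) {u α η η' : Mon N} (hu : u ∉ 𝔧)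
    (hα : α ∈ 𝔧) (hsc : StarCond α η') (heq : η + u = α + η') :
    toColex η' < toColex η := by
  classical
  have hcoord (i : Fin N) : η i + u i = α i + η' i := by simpa using DFunLike.congr_fun heq i
  have hαu : ¬ α ≤ u := fun hle => hu (add_tsub_cancel_of_le hle ▸ hJ α hα (u - α))
  obtain ⟨i, hi⟩ : ∃ i, u i < α i := by simpa [Finsupp.le_def] using hαu
  obtain ⟨t, ht, htop⟩ := (univ.filter fun i => u i < α i).exists_max_image id ⟨i, by simpa⟩
  simp only [mem_filter, mem_univ, true_and, id] at ht htop
  refine Colex.lt_iff.2 ⟨t, fun j hj => ?_, ?_⟩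
  · have hη'j : η' j = 0 := by
      by_contra h
      exact hj.not_ge (hsc t j (by omega) h)
    have := hcoord j
    have : α j ≤ u j := not_lt.1 fun h => hj.not_ge (htop j h)
    show η' j = η j
    omega
  · have := hcoord t
    show η' t < η t
    omega

noncomputable def starCofactors (𝔧 : Set (Mon N)) (γ : Mon N) : Finset (Mon N) :=
  open scoped Classical in (Iic γ).filter fun η => ∃ α ∈ 𝔧, StarCond α η ∧ γ = α + η

noncomputable def maxStarCofactor (𝔧 : Set (Mon N)) (γ : Mon N) : Colex (Fin N →₀ ℕ) :=
  (starCofactors 𝔧 γ).sup toColex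

lemma toColex_le_maxStarCofactor {α η : Mon N} (hα : α ∈ 𝔧) (hsc : StarCond α η) :
    toColex η ≤ maxStarCofactor 𝔧 (α + η) := by
  classical
  refine le_sup (f := toColex) ?_
  simp only [starCofactors, mem_filter, mem_Iic]
  exact ⟨le_add_self, α, hα, hsc, rfl⟩

lemma MonIdeal.maxStarCofactor_add_lt (hJ : MonIdeal 𝔧) {η u : Mon N} (hu : u ∉ 𝔧)
    (hηu : η + u ∈ 𝔧) : maxStarCofactor 𝔧 (η + u) < toColex η := by
  classical
  have hη : η ≠ 0 := by
    rintro rfl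
    exact hu (by simpa using hηu)
  have hbot : ⊥ < toColex η := bot_lt_iff_ne_bot.2 fun h => hη (toColex.injective h)
  refine (Finset.sup_lt_iff hbot).2 fun η' hη' => ?_
  simp only [starCofactors, mem_filter] at hη'
  obtain ⟨-, α, hα, hsc, heq⟩ := hη'
  exact hJ.toColex_lt_of_add_eq_s8 hu hα hsc heq

lemma coeff_sub_coeff_smul_mono_mul {α η : Mon N} {p : MvPolynomial (Fin N) K}
    (hp : coeff α p = 1) (g : MvPolynomial (Fin N) K) :
    coeff (α + η) (g - coeff (α + η) g • (mono K η * p)) = 0 := by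
  rw [coeff_sub, coeff_smul, add_comm, mono, coeff_monomial_mul, hp]
  simp

lemma exists_eq_add_of_mem_support_sub_smul_mono_mul {η δ : Mon N} {c : K}
    {g p : MvPolynomial (Fin N) K} (hδ : δ ∈ (g - c • (mono K η * p)).support)
    (hδg : δ ∉ g.support) : ∃ u ∈ p.support, δ = η + u := by
  classical
  have hδp : coeff δ (mono K η * p) ≠ 0 := by
    rcases mem_union.1 (support_sub _ _ _ hδ) with h | h
    · exact absurd h hδg
    · exact MvPolynomial.mem_support_iff.1 (MvPolynomial.support_smul h)
  rw [mono, coeff_monomial_mul'] at hδp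
  split_ifs at hδp with hle
  · refine ⟨δ - η, MvPolynomial.mem_support_iff.2 ?_, (add_tsub_cancel_of_le hle).symm⟩
    simpa using hδp
  · exact absurd rfl hδp

noncomputable def starMeasure (𝔧 : Set (Mon N)) (g : MvPolynomial (Fin N) K) :
    Multiset (Colex (Fin N →₀ ℕ)) :=
  open scoped Classical in (g.support.filter (· ∈ 𝔧)).val.map (maxStarCofactor 𝔧)

theorem RStep.isDershowitzMannaLT_starMeasure (hJ : MonIdeal 𝔧) (hms : NHMarkedSet K 𝔧 f)
    {g g₁ : MvPolynomial (Fin N) K} (h : RStep K 𝔧 f g g₁) :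
    (starMeasure 𝔧 g₁).IsDershowitzMannaLT (starMeasure 𝔧 g) := by
  classical
  obtain ⟨-, α, η, hγg, hγJ, hαB, rfl, hsc, rfl⟩ := h
  have hγ₁ : coeff (α + η) (g - coeff (α + η) g • (mono K η * f α)) = 0 :=
    coeff_sub_coeff_smul_mono_mul (hms α hαB).1 g
  have hγ : α + η ∈ g.support.filter (· ∈ 𝔧) := mem_filter.2 ⟨hγg, hγJ⟩
  have hγ₁' : α + η ∉ (g - coeff (α + η) g • (mono K η * f α)).support.filter (· ∈ 𝔧) := by
    simp [hγ₁]
  refine isDershowitzMannaLT_map_val _ hγ hγ₁' fun δ hδ₁ hδ => ⟨α + η, hγ, hγ₁', ?_⟩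
  rw [mem_filter] at hδ₁ hδ
  obtain ⟨u, hu, rfl⟩ :=
    exists_eq_add_of_mem_support_sub_smul_mono_mul hδ₁.1 fun h => hδ ⟨h, hδ₁.2⟩
  have huα : u ≠ α := fun h => hδ ⟨by rwa [h, add_comm], hδ₁.2⟩
  calc maxStarCofactor 𝔧 (η + u) < toColex η :=
        hJ.maxStarCofactor_add_lt ((hms α hαB).2 u hu huα) hδ₁.2
    _ ≤ maxStarCofactor 𝔧 (α + η) := toColex_le_maxStarCofactor hαB.1 hsc

theorem MonIdeal.wellFounded_flip_rStep (hJ : MonIdeal 𝔧) (hms : NHMarkedSet K 𝔧 f) :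
    WellFounded (flip (RStep K 𝔧 f)) :=
  Subrelation.wf (fun h => h.isDershowitzMannaLT_starMeasure hJ hms)
    (InvImage.wf (starMeasure 𝔧) Multiset.wellFounded_isDershowitzMannaLT)

theorem StronglyStable.exists_reduces_isReducedPoly (hss : StronglyStable 𝔧)
    (hms : NHMarkedSet K 𝔧 f) (g : MvPolynomial (Fin N) K) :
    ∃ g', Reduces K 𝔧 f g g' ∧ IsReducedPoly K 𝔧 g' := by
  induction g using (hss.1.wellFounded_flip_rStep hms).induction with
  | _ g ih =>
  by_cases hg : IsReducedPoly K 𝔧 g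
  · exact ⟨g, .refl, hg⟩
  simp only [IsReducedPoly, not_forall, not_not] at hg
  obtain ⟨γ, hγg, hγJ⟩ := hg
  obtain ⟨α, η, hαB, hsc, rfl⟩ := hss.exists_star_decomposition hγJ
  have hstep : RStep K 𝔧 f g (g - coeff (α + η) g • (mono K η * f α)) :=
    ⟨_, α, η, hγg, hγJ, hαB, rfl, hsc, rfl⟩
  obtain ⟨g', hg', hred⟩ := ih _ hstep
  exact ⟨g', .head hstep hg', hred⟩

end

/-- for a n.h. `𝔧`-marked set `𝔊`, the `𝔊_∗`-reduction is
Noetherian (no infinite chains of reduction steps) and every polynomial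
reduces to a reduced polynomial. -/
theorem reduction_noetherian {n : ℕ} (K : Type) [Field K]
    (𝔧 : Set (Mon n)) (f : Mon n → MvPolynomial (Fin n) K)
    (hss : StronglyStable 𝔧) (hms : NHMarkedSet K 𝔧 f) :
    (∀ s : ℕ → MvPolynomial (Fin n) K, ¬ ∀ i, RStep K 𝔧 f (s i) (s (i + 1))) ∧
    (∀ g : MvPolynomial (Fin n) K,
      ∃ g' : MvPolynomial (Fin n) K, Reduces K 𝔧 f g g' ∧ IsReducedPoly K 𝔧 g') :=
  ⟨fun s hs => (wellFounded_iff_isEmpty_descending_chain.1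
      (hss.1.wellFounded_flip_rStep hms)).elim ⟨s, hs⟩,
    hss.exists_reduces_isReducedPoly hms⟩

end Paper
end

section
/- Let 𝔧 be a strongly stable ideal in R, m a positive integer, and 𝔊 a [𝔧,m]-marked set. Then there exists a [𝔧,m]-completion of 𝔊 if and only if every polynomial g in R admits a [𝔧,m]-reduced form modulo the ideal (𝔊). -/
/-!
Reduced forms give a completion at once: take `x^β` minus a reduced form of `x^β`. Conversely,
a completion attaches to every `x^u ∈ 𝔧` a marked polynomial of `(𝔊)` with head `x^u` and tail
in `N(𝔧)_{≤ max(m, |u|)}`, and subtracting multiples of these from `g` leaves a reduced form.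
For minimal `u` it is `f_u`, for `|u| ≤ m` the completion supplies it; otherwise write
`x^u = x_i x^w` with `x^w ∈ 𝔧`, multiply the marked polynomial of `x^w` by `x_i` and reduce the
monomials of `𝔧` that appear in it. Each of them is `x_i x^s` with `x^s ∉ 𝔧` and `|s| ≤ |w|`,
and strong stability shows that no `x_j` with `j ≥ i` can be removed from it inside `𝔧`, so it
precedes `x^u` in the well-founded order by degree, then by the largest removable variable.
-/

open MvPolynomial

namespace Paper

variable {N : ℕ}

variable (K : Type) [Field K]

section Reduction

variable {σ R : Type*} [CommRing R]

/-- A marked polynomial with head term `x^u` and tail in `N(J)` restricted by `P`. -/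
def IsMarkedAt (J : Set (σ →₀ ℕ)) (P : (σ →₀ ℕ) → Prop) (u : σ →₀ ℕ)
    (p : MvPolynomial σ R) : Prop :=
  p.coeff u = 1 ∧ ∀ v ∈ p.support, v ≠ u → v ∉ J ∧ P v

variable {J : Set (σ →₀ ℕ)} {P Q : (σ →₀ ℕ) → Prop} {u : σ →₀ ℕ} {p : MvPolynomial σ R}

theorem IsMarkedAt.mono (hp : IsMarkedAt J P u p) (hPQ : ∀ v, P v → Q v) :
    IsMarkedAt J Q u p :=
  ⟨hp.1, fun v hv hvu => (hp.2 v hv hvu).imp_right (hPQ v)⟩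

theorem IsMarkedAt.coeff_of_mem [DecidableEq σ] (hp : IsMarkedAt J P u p) {v : σ →₀ ℕ}
    (hv : v ∈ J) : p.coeff v = if v = u then 1 else 0 := by
  split_ifs with hvu
  · exact hvu ▸ hp.1
  · exact notMem_support_iff.mp fun hs => (hp.2 v hs hvu).1 hv

theorem exists_sub_mem_coeff_eq_ite (I : Ideal (MvPolynomial σ R)) [DecidableEq σ]
    (S : Finset (σ →₀ ℕ)) (hSJ : ∀ τ ∈ S, τ ∈ J) (hS : ∀ τ ∈ S, ∃ G ∈ I, IsMarkedAt J P τ G)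
    (g : MvPolynomial σ R) (hg : ∀ v ∈ g.support, P v) :
    ∃ r, g - r ∈ I ∧ (∀ v ∈ J, r.coeff v = if v ∈ S then 0 else g.coeff v) ∧
      ∀ v ∈ r.support, P v := by
  induction S using Finset.induction_on with
  | empty => exact ⟨g, by simp, by simp, hg⟩
  | insert τ S hτS ih =>
    obtain ⟨r, hgr, hrJ, hrP⟩ := ih (fun v hv => hSJ v (Finset.mem_insert_of_mem hv))
      (fun v hv => hS v (Finset.mem_insert_of_mem hv))
    obtain ⟨G, hGI, hG⟩ := hS τ (Finset.mem_insert_self τ S)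
    have hr'J : ∀ v ∈ J, (r - r.coeff τ • G).coeff v =
        if v ∈ insert τ S then 0 else g.coeff v := by
      intro v hv
      rw [coeff_sub, coeff_smul, hG.coeff_of_mem hv]
      by_cases hvτ : v = τ
      · subst hvτ; simp [hrJ v hv, hτS]
      · simp [hrJ v hv, hvτ]
    refine ⟨r - r.coeff τ • G, ?_, hr'J, fun v hv => ?_⟩
    · rw [sub_sub_eq_add_sub, add_sub_right_comm]
      exact I.add_mem hgr (Submodule.smul_of_tower_mem I _ hGI)
    · rcases Finset.mem_union.mp (support_sub σ r _ hv) with hvr | hvG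
      · exact hrP v hvr
      · have hvτ : v ≠ τ := by
          rintro rfl
          exact mem_support_iff.mp hv (by simp [hr'J v (hSJ v (Finset.mem_insert_self v S))])
        exact (hG.2 v (support_smul hvG) hvτ).2

theorem exists_sub_mem_forall_support_notMem (I : Ideal (MvPolynomial σ R))
    (g : MvPolynomial σ R) (hg : ∀ v ∈ g.support, P v)
    (hS : ∀ τ ∈ g.support, τ ∈ J → ∃ G ∈ I, IsMarkedAt J P τ G) :
    ∃ r, g - r ∈ I ∧ ∀ v ∈ r.support, v ∉ J ∧ P v := by
  classical
  obtain ⟨r, hgr, hrJ, hrP⟩ := exists_sub_mem_coeff_eq_ite I {τ ∈ g.support | τ ∈ J}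
    (fun τ hτ => (Finset.mem_filter.mp hτ).2)
    (fun τ hτ => hS τ (Finset.mem_filter.mp hτ).1 (Finset.mem_filter.mp hτ).2) g hg
  refine ⟨r, hgr, fun v hv => ⟨fun hvJ => mem_support_iff.mp hv ?_, hrP v hv⟩⟩
  rw [hrJ v hvJ]
  split_ifs with hvS
  · rfl
  · exact notMem_support_iff.mp fun hvg => hvS (Finset.mem_filter.mpr ⟨hvg, hvJ⟩)

theorem exists_isMarkedAt_of_coeff_eq_one {I : Ideal (MvPolynomial σ R)} (hp : p ∈ I)
    (hu : u ∈ J) (hpu : p.coeff u = 1) (hpP : ∀ v ∈ p.support, P v)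
    (hS : ∀ τ ∈ p.support, τ ∈ J → τ ≠ u → ∃ G ∈ I, IsMarkedAt J P τ G) :
    ∃ q ∈ I, IsMarkedAt J P u q := by
  classical
  obtain ⟨r, hpr, hrJ, hrP⟩ := exists_sub_mem_coeff_eq_ite I {τ ∈ p.support | τ ∈ J ∧ τ ≠ u}
    (fun τ hτ => (Finset.mem_filter.mp hτ).2.1)
    (fun τ hτ => hS τ (Finset.mem_filter.mp hτ).1 (Finset.mem_filter.mp hτ).2.1
      (Finset.mem_filter.mp hτ).2.2) p hpP
  refine ⟨r, by simpa using I.sub_mem hp hpr, ?_, fun v hv hvu => ⟨fun hvJ => ?_, hrP v hv⟩⟩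
  · simp [hrJ u hu, hpu]
  · refine mem_support_iff.mp hv ?_
    rw [hrJ v hvJ]
    split_ifs with hvS
    · rfl
    · exact notMem_support_iff.mp fun hvp => hvS (Finset.mem_filter.mpr ⟨hvp, hvJ, hvu⟩)

end Reduction

section Removable

variable {n : ℕ}

theorem mdeg_single_add (i : Fin n) (w : Mon n) :
    mdeg (Finsupp.single i 1 + w) = mdeg w + 1 := by
  change (Finsupp.single i 1 + w).degree = w.degree + 1
  simp [add_comm]

open Classical in
noncomputable def removableVars (J : Set (Mon n)) (u : Mon n) : Finset (Fin n) :=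
  {i | u i ≠ 0 ∧ u - Finsupp.single i 1 ∈ J}

noncomputable def maxRemovable (J : Set (Mon n)) (u : Mon n) : ℕ :=
  (removableVars J u).sup fun i => (i : ℕ) + 1

variable {J : Set (Mon n)} {u s : Mon n} {i j : Fin n}

theorem mem_removableVars : i ∈ removableVars J u ↔ u i ≠ 0 ∧ u - Finsupp.single i 1 ∈ J := by
  classical
  simp [removableVars]

theorem removableVars_nonempty (hJ : MonIdeal J) (hu : u ∈ J) (hmin : u ∉ MinBasis J) :
    (removableVars J u).Nonempty := by
  obtain ⟨v, hvJ, hvu, hne⟩ : ∃ v ∈ J, v ≤ u ∧ v ≠ u := by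
    by_contra! h
    exact hmin ⟨hu, h⟩
  obtain ⟨i, hi⟩ : ∃ i, v i < u i := by
    by_contra! h
    exact hne (le_antisymm hvu h)
  have hvle : v ≤ u - Finsupp.single i 1 := fun j => by
    rw [Finsupp.tsub_apply, Finsupp.single_apply]
    split_ifs with hij
    · subst hij; omega
    · exact Nat.le_sub_of_add_le (by simpa using hvu j)
  refine ⟨i, mem_removableVars.mpr ⟨by omega, ?_⟩⟩
  exact add_tsub_cancel_of_le hvle ▸ hJ v hvJ _

theorem lt_of_mem_removableVars_single_add (hss : StronglyStable J) (hs : s ∉ J)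
    (hj : j ∈ removableVars J (Finsupp.single i 1 + s)) : j < i := by
  obtain ⟨hj0, hjJ⟩ := mem_removableVars.mp hj
  rcases lt_trichotomy j i with hji | rfl | hij
  · exact hji
  · rw [add_tsub_cancel_left] at hjJ
    exact absurd hjJ hs
  · refine absurd (hss.2 _ hjJ s (Relation.TransGen.single ⟨i, j, hij, ?_⟩)) hs
    rw [tsub_add_cancel_of_le (Finsupp.single_le_iff.mpr (Nat.one_le_iff_ne_zero.mpr hj0)),
      add_comm]

theorem maxRemovable_single_add_le (hss : StronglyStable J) (hs : s ∉ J) :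
    maxRemovable J (Finsupp.single i 1 + s) ≤ i :=
  Finset.sup_le fun _ hj => lt_of_mem_removableVars_single_add hss hs hj

theorem lt_maxRemovable (hi : i ∈ removableVars J u) : (i : ℕ) < maxRemovable J u :=
  Finset.le_sup (f := fun i : Fin n => (i : ℕ) + 1) hi

end Removable

section Completion

variable {n : ℕ} {J : Set (Mon n)} {i : Fin n}

noncomputable def reductionRank (J : Set (Mon n)) (u : Mon n) : ℕ ×ₗ ℕ :=
  toLex (mdeg u, maxRemovable J u)

theorem reductionRank_lt_of_mdeg_lt {u v : Mon n} (h : mdeg v < mdeg u) :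
    reductionRank J v < reductionRank J u :=
  Prod.Lex.toLex_lt_toLex.mpr (Or.inl h)

theorem reductionRank_single_add_lt (hss : StronglyStable J) {s w : Mon n} (hs : s ∉ J)
    (hsw : mdeg s ≤ mdeg w) (hi : i ∈ removableVars J (Finsupp.single i 1 + w)) :
    reductionRank J (Finsupp.single i 1 + s) < reductionRank J (Finsupp.single i 1 + w) := by
  refine Prod.Lex.toLex_lt_toLex'.mpr ⟨?_, fun _ => ?_⟩
  · simpa [mdeg_single_add] using hsw
  · exact (maxRemovable_single_add_le hss hs).trans_lt (lt_maxRemovable hi)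

theorem exists_isMarkedAt_single_add {R : Type*} [CommRing R]
    {I : Ideal (MvPolynomial (Fin n) R)} {m : ℕ} (hss : StronglyStable J) {w : Mon n}
    (hu : Finsupp.single i 1 + w ∈ J)
    (hi : i ∈ removableVars J (Finsupp.single i 1 + w)) (hmw : m ≤ mdeg w)
    (hw : ∃ q ∈ I, IsMarkedAt J (fun v => mdeg v ≤ max m (mdeg w)) w q)
    (ih : ∀ τ ∈ J, reductionRank J τ < reductionRank J (Finsupp.single i 1 + w) →
      ∃ G ∈ I, IsMarkedAt J (fun v => mdeg v ≤ max m (mdeg τ)) τ G) :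
    ∃ p ∈ I, IsMarkedAt J (fun v => mdeg v ≤ max m (mdeg (Finsupp.single i 1 + w)))
      (Finsupp.single i 1 + w) p := by
  obtain ⟨q, hqI, hq⟩ := hw
  have hmax : max m (mdeg (Finsupp.single i 1 + w)) = mdeg w + 1 := by
    rw [mdeg_single_add]; omega
  have hqdeg : ∀ s ∈ q.support, mdeg s ≤ mdeg w := fun s hs => by
    rcases eq_or_ne s w with rfl | hsw
    · rfl
    · simpa [hmw] using (hq.2 s hs hsw).2
  have hsupp : ∀ v ∈ (X i * q).support, ∃ s ∈ q.support, v = Finsupp.single i 1 + s := by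
    simp [eq_comm]
  simp only [hmax]
  refine exists_isMarkedAt_of_coeff_eq_one (I.mul_mem_left (X i) hqI) hu (by simpa using hq.1)
    ?_ ?_
  · intro v hv
    obtain ⟨s, hs, rfl⟩ := hsupp v hv
    simpa [mdeg_single_add] using hqdeg s hs
  · intro τ hτ hτJ hτu
    obtain ⟨s, hs, rfl⟩ := hsupp τ hτ
    have hsw : s ≠ w := by rintro rfl; exact hτu rfl
    obtain ⟨G, hGI, hG⟩ := ih _ hτJ
      (reductionRank_single_add_lt hss (hq.2 s hs hsw).1 (hqdeg s hs) hi)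
    refine ⟨G, hGI, hG.mono fun v hv => hv.trans (max_le (by omega) ?_)⟩
    simpa [mdeg_single_add] using hqdeg s hs

variable {K : Type} [Field K] {m : ℕ} {f h : Mon n → MvPolynomial (Fin n) K}

theorem exists_isMarkedAt_of_isCompletion (hss : StronglyStable J) (hms : JmMarkedSet K J m f)
    (hcomp : IsCompletion K J m f h) (u : Mon n) (hu : u ∈ J) :
    ∃ p ∈ idealG K J f, IsMarkedAt J (fun v => mdeg v ≤ max m (mdeg u)) u p := by
  induction u using (InvImage.wf (reductionRank J) wellFounded_lt).induction with
  | _ u ih =>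
  by_cases hmin : u ∈ MinBasis J
  · exact ⟨f u, Ideal.subset_span ⟨u, hmin, rfl⟩, hms u hmin⟩
  by_cases hdeg : mdeg u ≤ m
  · obtain ⟨hI, hc⟩ := hcomp u hu hdeg hmin
    exact ⟨h u, hI, IsMarkedAt.mono hc fun v hv => le_max_of_le_left hv⟩
  obtain ⟨i, hi⟩ := removableVars_nonempty hss.1 hu hmin
  obtain ⟨hui, hwJ⟩ := mem_removableVars.mp hi
  have hiu : Finsupp.single i 1 ≤ u := Finsupp.single_le_iff.mpr (Nat.one_le_iff_ne_zero.mpr hui)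
  obtain ⟨w, rfl⟩ : ∃ w, u = Finsupp.single i 1 + w := ⟨_, (add_tsub_cancel_of_le hiu).symm⟩
  rw [add_tsub_cancel_left] at hwJ
  have hmw : m ≤ mdeg w := by rw [mdeg_single_add] at hdeg; omega
  exact exists_isMarkedAt_single_add hss hu hi hmw
    (ih w (reductionRank_lt_of_mdeg_lt (by rw [mdeg_single_add]; omega)) hwJ)
    fun τ hτ hlt => ih τ hlt hτ

end Completion

section ReducedForm

variable {n : ℕ} {K : Type} [Field K] {J : Set (Mon n)} {m : ℕ}
  {f : Mon n → MvPolynomial (Fin n) K}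

theorem exists_isReducedForm_of_isCompletion {h : Mon n → MvPolynomial (Fin n) K}
    (hss : StronglyStable J) (hms : JmMarkedSet K J m f) (hcomp : IsCompletion K J m f h)
    (g : MvPolynomial (Fin n) K) : ∃ g', IsReducedForm K J m f g g' := by
  obtain ⟨r, hgr, hr⟩ := exists_sub_mem_forall_support_notMem (idealG K J f) g
    (P := fun v => mdeg v ≤ max m g.totalDegree)
    (fun v hv => le_max_of_le_right (le_totalDegree hv))
    fun τ hτ hτJ => (exists_isMarkedAt_of_isCompletion hss hms hcomp τ hτJ).imp fun G hG =>
      ⟨hG.1, hG.2.mono fun v hv => hv.trans (max_le_max le_rfl (le_totalDegree hτ))⟩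
  exact ⟨r, hr, hgr⟩

theorem isCompletion_sub_of_isReducedForm {g' : Mon n → MvPolynomial (Fin n) K}
    (hg' : ∀ β, IsReducedForm K J m f (mono K β) (g' β)) :
    IsCompletion K J m f fun β => mono K β - g' β := by
  intro β hβ hβm _
  obtain ⟨hsupp, hmem⟩ := hg' β
  have htail : ∀ v ∈ (g' β).support, v ∉ J ∧ mdeg v ≤ m := fun v hv => by
    have hdeg : (mono K β).totalDegree = mdeg β := totalDegree_monomial β one_ne_zero
    simpa [hdeg, hβm] using hsupp v hv
  refine ⟨hmem, ?_, fun v hv hvβ => htail v ?_⟩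
  · rw [coeff_sub, notMem_support_iff.mp fun hβs => (htail β hβs).1 hβ]
    simp [mono]
  · refine mem_support_iff.mpr fun hv0 => mem_support_iff.mp hv ?_
    simp [mono, coeff_monomial, Ne.symm hvβ, hv0]

end ReducedForm

theorem completion_iff_reducedForms_general {n : ℕ} (K : Type) [Field K]
    (𝔧 : Set (Mon n)) (m : ℕ) (f : Mon n → MvPolynomial (Fin n) K)
    (hss : StronglyStable 𝔧) (hms : JmMarkedSet K 𝔧 m f) :
    (∃ h : Mon n → MvPolynomial (Fin n) K, IsCompletion K 𝔧 m f h) ↔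
    (∀ g : MvPolynomial (Fin n) K,
      ∃ g' : MvPolynomial (Fin n) K, IsReducedForm K 𝔧 m f g g') := by
  constructor
  · rintro ⟨h, hcomp⟩
    exact exists_isReducedForm_of_isCompletion hss hms hcomp
  · intro hred
    choose g' hg' using fun β => hred (mono K β)
    exact ⟨_, isCompletion_sub_of_isReducedForm hg'⟩

/-- a `[𝔧,m]`-marked set `𝔊` admits a `[𝔧,m]`-completion iff
every polynomial admits a `[𝔧,m]`-reduced form modulo `(𝔊)`. -/
theorem completion_iff_reducedForms {n : ℕ} (K : Type) [Field K]
    (𝔧 : Set (Mon n)) (m : ℕ) (f : Mon n → MvPolynomial (Fin n) K)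
    (hss : StronglyStable 𝔧) (hm : 0 < m) (hms : JmMarkedSet K 𝔧 m f) :
    (∃ h : Mon n → MvPolynomial (Fin n) K, IsCompletion K 𝔧 m f h) ↔
    (∀ g : MvPolynomial (Fin n) K,
      ∃ g' : MvPolynomial (Fin n) K, IsReducedForm K 𝔧 m f g g') :=
  completion_iff_reducedForms_general K 𝔧 m f hss hms

end Paper
end

section
/- Let 𝔊 be a [𝔧,m]-marked basis in R. Then for every monomial x^β and every variable x_i, the normal forms satisfy Nf(x_i x^β) = Nf(x_i · Nf(x^β)). -/
open MvPolynomial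

namespace Paper

variable {N : ℕ}

variable (K : Type) [Field K]

/-!
Both sides are `[𝔧,m]`-reduced forms, of `x_i x^β` and of `x_i Nf(x^β)`, whose difference
`x_i (x^β - Nf(x^β))` lies in `(𝔊)`. Two reduced forms of polynomials congruent modulo `(𝔊)`
differ by an element of `⟨N(𝔧)_{≤t}⟩ ∩ (𝔊)_{≤t}` for some `t ≥ m`, which is zero for a marked basis.
-/

lemma spanNLE_eq_restrictSupport (𝔧 : Set (Mon N)) (t : ℕ) :
    spanNLE K 𝔧 t = restrictSupport K {u | u ∉ 𝔧 ∧ mdeg u ≤ t} :=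
  (restrictSupport_eq_span K _).symm

lemma mem_spanNLE_iff {𝔧 : Set (Mon N)} {t : ℕ} {p : MvPolynomial (Fin N) K} :
    p ∈ spanNLE K 𝔧 t ↔ ∀ u ∈ p.support, u ∉ 𝔧 ∧ mdeg u ≤ t := by
  rw [spanNLE_eq_restrictSupport, mem_restrictSupport_iff]
  rfl

lemma spanNLE_le_degLE (𝔧 : Set (Mon N)) (t : ℕ) : spanNLE K 𝔧 t ≤ degLE K N t :=
  fun _ hp u hu => ((mem_spanNLE_iff K).mp hp u hu).2

lemma JmMarkedBasis.eq_of_sub_mem_idealG {𝔧 : Set (Mon N)} {m t : ℕ}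
    {f : Mon N → MvPolynomial (Fin N) K} (hG : JmMarkedBasis K 𝔧 m f) (hmt : m ≤ t)
    {a b : MvPolynomial (Fin N) K} (ha : a ∈ spanNLE K 𝔧 t) (hb : b ∈ spanNLE K 𝔧 t)
    (hab : a - b ∈ idealG K 𝔧 f) : a = b := by
  have hN : a - b ∈ spanNLE K 𝔧 t := sub_mem ha hb
  have hGt : a - b ∈ GleSub K 𝔧 f t := ⟨hab, spanNLE_le_degLE K 𝔧 t hN⟩
  exact sub_eq_zero.mp (Submodule.disjoint_def.mp (hG.2 t hmt).1 _ hN hGt)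

lemma IsReducedForm.mem_spanNLE {𝔧 : Set (Mon N)} {m t : ℕ}
    {f : Mon N → MvPolynomial (Fin N) K} {g g' : MvPolynomial (Fin N) K}
    (h : IsReducedForm K 𝔧 m f g g') (ht : max m g.totalDegree ≤ t) :
    g' ∈ spanNLE K 𝔧 t :=
  (mem_spanNLE_iff K).mpr fun u hu => ⟨(h.1 u hu).1, (h.1 u hu).2.trans ht⟩

lemma JmMarkedBasis.reducedForm_eq {𝔧 : Set (Mon N)} {m : ℕ}
    {f : Mon N → MvPolynomial (Fin N) K} (hb : JmMarkedBasis K 𝔧 m f)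
    {g₁ g₂ r₁ r₂ : MvPolynomial (Fin N) K} (h₁ : IsReducedForm K 𝔧 m f g₁ r₁)
    (h₂ : IsReducedForm K 𝔧 m f g₂ r₂) (hg : g₁ - g₂ ∈ idealG K 𝔧 f) : r₁ = r₂ := by
  have hr : r₁ - r₂ = (g₁ - g₂) - (g₁ - r₁) + (g₂ - r₂) := by ring
  refine hb.eq_of_sub_mem_idealG K (le_max_left _ _)
    (h₁.mem_spanNLE K (max_le_max_left m (le_max_left _ _)))
    (h₂.mem_spanNLE K (max_le_max_left m (le_max_right _ _))) ?_
  rw [hr]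
  exact add_mem (sub_mem hg h₁.2) h₂.2

theorem normalForm_mul_var_general {n : ℕ} (K : Type) [Field K]
    (𝔧 : Set (Mon n)) (m : ℕ) (f : Mon n → MvPolynomial (Fin n) K)
    (hb : JmMarkedBasis K 𝔧 m f)
    (Nf : MvPolynomial (Fin n) K → MvPolynomial (Fin n) K)
    (hNf : ∀ g, IsReducedForm K 𝔧 m f g (Nf g)) :
    ∀ (β : Mon n) (i : Fin n),
      Nf (MvPolynomial.X i * mono K β) = Nf (MvPolynomial.X i * Nf (mono K β)) := by
  intro β i
  refine hb.reducedForm_eq K (hNf _) (hNf _) ?_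
  rw [← mul_sub]
  exact Ideal.mul_mem_left _ _ (hNf _).2

/-- if `𝔊` is a `[𝔧,m]`-marked basis, with normal form operator
`Nf`, then `Nf(x_i x^β) = Nf(x_i · Nf(x^β))` for every monomial `x^β` and
variable `x_i`. -/
theorem normalForm_mul_var {n : ℕ} (K : Type) [Field K]
    (𝔧 : Set (Mon n)) (m : ℕ) (f : Mon n → MvPolynomial (Fin n) K)
    (hss : StronglyStable 𝔧) (hm : 0 < m) (hb : JmMarkedBasis K 𝔧 m f)
    (Nf : MvPolynomial (Fin n) K → MvPolynomial (Fin n) K)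
    (hNf : ∀ g, IsReducedForm K 𝔧 m f g (Nf g)) :
    ∀ (β : Mon n) (i : Fin n),
      Nf (MvPolynomial.X i * mono K β) = Nf (MvPolynomial.X i * Nf (mono K β)) :=
  normalForm_mul_var_general K 𝔧 m f hb Nf hNf

end Paper
end
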